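/- Let n ≥ 3 and let f be a smooth symmetric 3-tensor field on the unit round sphere S^{n-1} with the following property: for every homogeneous polynomial p ∈ ℝ[x₁, …, xₙ] (restricted to S^{n-1}) there exists a smooth symmetric 2-tensor field k on S^{n-1} such that p·f = Dk, where D is the symmetrized covariant derivative of the round metric. Then f is identically 0. -/

import Mathlib

open Filter MeasureTheory Topology Set

noncomputable section

namespace AE

/-- Euclidean space `ℝⁿ`. -/
abbrev E (n : ℕ) := EuclideanSpace ℝ (Fin n)

/-- The Euclidean dot product written in coordinates. -/
def dot {n : ℕ} (u v : E n) : ℝ := ∑ i, u i * v i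

/-- The inner product `g_x(u,v)` of a metric given by its matrix of coefficients. -/
def gInner (n : ℕ) (g : E n → Fin n → Fin n → ℝ) (x u v : E n) : ℝ :=
  ∑ i, ∑ j, g x i j * u i * v j

/-- `g` is a (smooth) Riemannian metric on `ℝⁿ`, given by its coefficients
`g_{ij}` in the Cartesian coordinates: it is smooth, symmetric and positive definite. -/
def IsRiemannianMetric (n : ℕ) (g : E n → Fin n → Fin n → ℝ) : Prop :=
  ContDiff ℝ (⊤ : ℕ∞) g ∧ (∀ x i j, g x i j = g x j i) ∧
    ∀ x : E n, ∀ v : E n, v ≠ 0 → 0 < gInner n g x v v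

/-- The coefficients of the Euclidean metric `g₀ = δ_{ij}`. -/
def euclMetric (n : ℕ) : E n → Fin n → Fin n → ℝ := fun _ i j => if i = j then 1 else 0

/-- A Riemannian metric `g` on `ℝⁿ` is asymptotically Euclidean to order `m ≥ 1`:
outside a compact neighborhood of the origin,
`g = g₀ + |x|^{-m} Σ a_{ij}(1/|x|, x/|x|) dx_i dx_j` for smooth functions
`a_{ij} ∈ C^∞([0,1] × S^{n-1})` (represented by a smooth family on `ℝ × ℝⁿ`),
and moreover `|x|^{-m} Σ a_{ij} x_i x_j = O(1)` as `|x| → ∞`. -/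
def IsAsymptoticallyEuclidean (n : ℕ) (g : E n → Fin n → Fin n → ℝ) (m : ℝ) : Prop :=
  IsRiemannianMetric n g ∧ 1 ≤ m ∧
  ∃ (R₀ C : ℝ) (a : ℝ → E n → Fin n → Fin n → ℝ),
    0 < R₀ ∧
    ContDiff ℝ (⊤ : ℕ∞) (fun p : ℝ × E n => a p.1 p.2) ∧
    ∀ x : E n, R₀ ≤ ‖x‖ →
      (∀ i j, g x i j = euclMetric n x i j + ‖x‖ ^ (-m) * a ‖x‖⁻¹ (‖x‖⁻¹ • x) i j) ∧
      |‖x‖ ^ (-m) * ∑ i, ∑ j, a ‖x‖⁻¹ (‖x‖⁻¹ • x) i j * x i * x j| ≤ C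

/-- Partial derivative of a scalar function in the `i`-th coordinate direction. -/
def pderiv (n : ℕ) (f : E n → ℝ) (x : E n) (i : Fin n) : ℝ :=
  fderiv ℝ f x (EuclideanSpace.single i 1)

/-- The Christoffel symbols `Γ^k_{ij}` of `g` in the Cartesian coordinates. -/
def christoffel (n : ℕ) (g : E n → Fin n → Fin n → ℝ) (x : E n) (k i j : Fin n) : ℝ :=
  (1/2) * ∑ l, (Matrix.of (g x))⁻¹ k l *
    (pderiv n (fun y => g y l j) x i + pderiv n (fun y => g y l i) x j
      - pderiv n (fun y => g y i j) x l)

/-- `γ : ℝ → ℝⁿ` is a (complete, affinely parametrized) geodesic of `g`. -/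
def IsGeodesic (n : ℕ) (g : E n → Fin n → Fin n → ℝ) (γ : ℝ → E n) : Prop :=
  ContDiff ℝ (⊤ : ℕ∞) γ ∧
  ∀ (t : ℝ) (k : Fin n),
    deriv (fun s => deriv γ s k) t
      + ∑ i, ∑ j, christoffel n g (γ t) k i j * deriv γ t i * deriv γ t j = 0

/-- `γ` has unit speed for `g`. -/
def IsUnitSpeed (n : ℕ) (g : E n → Fin n → Fin n → ℝ) (γ : ℝ → E n) : Prop :=
  ∀ t : ℝ, gInner n g (γ t) (deriv γ t) (deriv γ t) = 1

/-- `J` is a Jacobi field along the geodesic `γ`: it is the variation field of a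
smooth one-parameter family of geodesics. -/
def IsJacobiField (n : ℕ) (g : E n → Fin n → Fin n → ℝ) (γ J : ℝ → E n) : Prop :=
  ∃ V : ℝ → ℝ → E n,
    ContDiff ℝ (⊤ : ℕ∞) (fun p : ℝ × ℝ => V p.1 p.2) ∧
    (∀ t, V 0 t = γ t) ∧ (∀ s, IsGeodesic n g (V s)) ∧
    ∀ t, J t = deriv (fun s => V s t) 0

/-- The metric `g` has no conjugate points: no nonzero Jacobi field along a geodesic
vanishes at two distinct times. -/
def NoConjugatePoints (n : ℕ) (g : E n → Fin n → Fin n → ℝ) : Prop :=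
  ∀ γ : ℝ → E n, IsGeodesic n g γ →
    ∀ J : ℝ → E n, IsJacobiField n g γ J →
      ∀ t₁ t₂ : ℝ, t₁ ≠ t₂ → J t₁ = 0 → J t₂ = 0 → ∀ t, J t = 0

/-- The covariant derivative `∇_{γ̇} J` of a vector field `J` along a curve `γ`. -/
def covDerivAlong (n : ℕ) (g : E n → Fin n → Fin n → ℝ) (γ J : ℝ → E n) (t : ℝ) : E n :=
  (EuclideanSpace.equiv (Fin n) ℝ).symm fun k =>
    deriv (fun s => J s k) t
      + ∑ i, ∑ j, christoffel n g (γ t) k i j * deriv γ t i * J t j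

/-- The Riemann curvature tensor `R_x(v₁,v₂,v₃,v₄)` of `g`, written in the Cartesian
coordinates in terms of the Christoffel symbols. -/
def riemannCurv (n : ℕ) (g : E n → Fin n → Fin n → ℝ) (x v₁ v₂ v₃ v₄ : E n) : ℝ :=
  ∑ i, ∑ j, ∑ k, ∑ l,
    ((∑ p, g x l p *
      (pderiv n (fun y => christoffel n g y p j k) x i
        - pderiv n (fun y => christoffel n g y p i k) x j
        + ∑ s, (christoffel n g x p i s * christoffel n g x s j k
            - christoffel n g x p j s * christoffel n g x s i k)))
      * v₁ i * v₂ j * v₃ k * v₄ l)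

/-- The `g`-length of the curve `γ : [a,b] → ℝⁿ`. -/
def pathLength (n : ℕ) (g : E n → Fin n → Fin n → ℝ) (γ : ℝ → E n) (a b : ℝ) : ℝ :=
  ∫ t in a..b, Real.sqrt (gInner n g (γ t) (deriv γ t) (deriv γ t))

/-- The Riemannian distance of `g`: the infimum of the `g`-lengths of `C¹` curves
joining the two points. -/
def riemDist (n : ℕ) (g : E n → Fin n → Fin n → ℝ) (p q : E n) : ℝ :=
  sInf {L : ℝ | ∃ γ : ℝ → E n,
    ContDiff ℝ 1 γ ∧ γ 0 = p ∧ γ 1 = q ∧ L = pathLength n g γ 0 1}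

/-- The Riemannian volume of a set `A ⊆ ℝⁿ` for the metric `g`. -/
def riemVolume (n : ℕ) (g : E n → Fin n → Fin n → ℝ) (A : Set (E n)) : ℝ :=
  ∫ x in A, Real.sqrt (Matrix.of (g x)).det

/-- `ρ` is a fixed smooth positive function on `ℝⁿ` equal to `1/|x|` outside a compact
set (a boundary defining function for the radial compactification of `ℝⁿ`). -/
def IsRadialBdf (n : ℕ) (ρ : E n → ℝ) : Prop :=
  ContDiff ℝ (⊤ : ℕ∞) ρ ∧ (∀ x, 0 < ρ x) ∧
    ∃ R₁ : ℝ, 0 < R₁ ∧ ∀ x : E n, R₁ ≤ ‖x‖ → ρ x = ‖x‖⁻¹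

/-- The musical isomorphism: the covector `g(v,·)` at `x`, written as an ambient
vector of components `ξ_i = Σ_j g_{ij} v_j`. -/
def flat (n : ℕ) (g : E n → Fin n → Fin n → ℝ) (x v : E n) : E n :=
  (EuclideanSpace.equiv (Fin n) ℝ).symm fun i => ∑ j, g x i j * v j

/-- The coefficient `ξ̄₀` of `dρ/ρ²` in the decomposition of the covector `γ̇(t)^♭`
in the coordinates `(ρ = 1/|x|, y = x/|x|)` near infinity. -/
def radialCoeff (n : ℕ) (g : E n → Fin n → Fin n → ℝ) (γ : ℝ → E n) (t : ℝ) : ℝ :=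
  - dot (flat n g (γ t) (deriv γ t)) (‖γ t‖⁻¹ • γ t)

/-- The `ρ^{-1}`-rescaled tangential part `η̄(t)/ρ` of the covector `γ̇(t)^♭` in the
coordinates `(ρ, y)` near infinity, identified with an ambient vector orthogonal
to the radial direction. -/
def rescaledTangential (n : ℕ) (g : E n → Fin n → Fin n → ℝ) (γ : ℝ → E n) (t : ℝ) : E n :=
  ‖γ t‖ • (flat n g (γ t) (deriv γ t)
      - dot (flat n g (γ t) (deriv γ t)) (‖γ t‖⁻¹ • γ t) • (‖γ t‖⁻¹ • γ t))

/-- The forward limiting scattering data `(y₊, η₊) ∈ T*S^{n-1}` of a unit-speed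
geodesic `γ`: as `t → +∞`, `|γ(t)| → ∞`, `γ(t)/|γ(t)| → y₊`, the coefficient
`ξ̄₀(t) → -1`, and the rescaled tangential covector converges to `η₊`. -/
def HasForwardData (n : ℕ) (g : E n → Fin n → Fin n → ℝ) (γ : ℝ → E n) (y η : E n) : Prop :=
  ‖y‖ = 1 ∧ dot y η = 0 ∧
  Tendsto (fun t => ‖γ t‖) atTop atTop ∧
  Tendsto (fun t => ‖γ t‖⁻¹ • γ t) atTop (𝓝 y) ∧
  Tendsto (radialCoeff n g γ) atTop (𝓝 (-1)) ∧
  Tendsto (rescaledTangential n g γ) atTop (𝓝 η)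

/-- The backward limiting scattering data `(y₋, η₋) ∈ T*S^{n-1}` of a unit-speed
geodesic `γ` (limits as `t → -∞`, with `ξ̄₀(t) → +1`). -/
def HasBackwardData (n : ℕ) (g : E n → Fin n → Fin n → ℝ) (γ : ℝ → E n) (y η : E n) : Prop :=
  ‖y‖ = 1 ∧ dot y η = 0 ∧
  Tendsto (fun t => ‖γ t‖) atBot atTop ∧
  Tendsto (fun t => ‖γ t‖⁻¹ • γ t) atBot (𝓝 y) ∧
  Tendsto (radialCoeff n g γ) atBot (𝓝 1) ∧
  Tendsto (rescaledTangential n g γ) atBot (𝓝 η)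

/-- The scattering map of `g` coincides with the Euclidean scattering map
`S_{g₀}(y, η) = (Θ(y), (dΘ(y)⁻¹)^T η)`, where `Θ(y) = -y` is the antipodal map
(which acts as `-1` on the ambient identifications of tangent covectors):
every unit-speed geodesic of `g` with backward data `(y₋, η₋)` has forward data
`(-y₋, -η₋)`. -/
def ScatteringEqualsEuclidean (n : ℕ) (g : E n → Fin n → Fin n → ℝ) : Prop :=
  ∀ γ : ℝ → E n, IsGeodesic n g γ → IsUnitSpeed n g γ →
    ∀ ym ηm yp ηp : E n,
      HasBackwardData n g γ ym ηm → HasForwardData n g γ yp ηp →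
        yp = -ym ∧ ηp = -ηm

/-- `(ℝⁿ, g)` is isometric to the Euclidean `(ℝⁿ, g₀)`: there is a diffeomorphism
`ψ : ℝⁿ → ℝⁿ` with `ψ*g = g₀`. -/
def IsometricToEuclidean (n : ℕ) (g : E n → Fin n → Fin n → ℝ) : Prop :=
  ∃ ψ φ : E n → E n,
    ContDiff ℝ (⊤ : ℕ∞) ψ ∧ ContDiff ℝ (⊤ : ℕ∞) φ ∧
    Function.LeftInverse φ ψ ∧ Function.RightInverse φ ψ ∧
    ∀ x u v : E n, gInner n g (ψ x) (fderiv ℝ ψ x u) (fderiv ℝ ψ x v) = dot u v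

/-- `γ` is asymptotic (in position and velocity) to the Euclidean line
`t ↦ x₀ + t v₀` along the filter `l` (`atTop` or `atBot`). -/
def AsymptoticToLine (n : ℕ) (γ : ℝ → E n) (x₀ v₀ : E n) (l : Filter ℝ) : Prop :=
  Tendsto (fun t => ‖γ t - (x₀ + t • v₀)‖) l (𝓝 0) ∧
  Tendsto (fun t => deriv γ t - v₀) l (𝓝 0)

/-- `γ` is asymptotic to the same parametrized Euclidean line at both ends. -/
def AsymptoticBothEnds (n : ℕ) (γ : ℝ → E n) (x₀ v₀ : E n) : Prop :=
  AsymptoticToLine n γ x₀ v₀ atTop ∧ AsymptoticToLine n γ x₀ v₀ atBot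

/-- `θ : Tℝⁿ∖{0} → Tℝⁿ∖{0}` is the conjugacy of the geodesic flows of `g₀` and `g`,
extended by positive homogeneity in the fiber: `θ(x₀, v₀) = (γ(0), γ̇(0))` where `γ`
is the unit-speed `g`-geodesic asymptotic at both ends to the Euclidean line
`t ↦ x₀ + t v₀`, for `|v₀| = 1`. -/
def IsFlowConjugacy (n : ℕ) (g : E n → Fin n → Fin n → ℝ)
    (θ : E n × E n → E n × E n) : Prop :=
  (∀ x₀ v₀ : E n, ‖v₀‖ = 1 →
    ∃ γ : ℝ → E n, IsGeodesic n g γ ∧ IsUnitSpeed n g γ ∧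
      AsymptoticBothEnds n γ x₀ v₀ ∧ θ (x₀, v₀) = (γ 0, deriv γ 0)) ∧
  (∀ (x₀ v₀ : E n) (c : ℝ), v₀ ≠ 0 → 0 < c →
    θ (x₀, c • v₀) = ((θ (x₀, v₀)).1, c • (θ (x₀, v₀)).2))


lemma dot_eq_inner {n : ℕ} (u v : E n) : dot u v = inner ℝ u v := by
  rw [PiLp.inner_apply]
  simp [dot, RCLike.inner_apply, conj_trivial, mul_comm]

lemma dot_comm {n : ℕ} (u v : E n) : dot u v = dot v u := by
  simp [dot, mul_comm]

lemma dot_self_eq_norm_sq {n : ℕ} (u : E n) : dot u u = ‖u‖ ^ 2 := by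
  rw [dot_eq_inner]; exact real_inner_self_eq_norm_sq u

lemma norm_eq_one_of_dot {n : ℕ} {u : E n} (h : dot u u = 1) : ‖u‖ = 1 := by
  rw [dot_self_eq_norm_sq] at h
  nlinarith [norm_nonneg u]

lemma dot_comb {n : ℕ} {y w : E n} (hy : ‖y‖ = 1) (hw : ‖w‖ = 1) (hyw : dot y w = 0)
    (a b a' b' : ℝ) :
    dot (a • y + b • w) (a' • y + b' • w) = a * a' + b * b' := by
  have hyy : dot y y = 1 := by rw [dot_self_eq_norm_sq, hy]; norm_num
  have hww : dot w w = 1 := by rw [dot_self_eq_norm_sq, hw]; norm_num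
  have hwy : dot w y = 0 := by rw [dot_comm]; exact hyw
  simp only [dot, PiLp.add_apply, PiLp.smul_apply, smul_eq_mul] at hyy hww hyw hwy ⊢
  have h : ∀ i, (a * y i + b * w i) * (a' * y i + b' * w i)
      = (a * a') * (y i * y i) + (a * b') * (y i * w i) + (b * a') * (w i * y i)
        + (b * b') * (w i * w i) := fun i => by ring
  rw [Finset.sum_congr rfl fun i _ => h i]
  rw [Finset.sum_add_distrib, Finset.sum_add_distrib, Finset.sum_add_distrib,
    ← Finset.mul_sum, ← Finset.mul_sum, ← Finset.mul_sum, ← Finset.mul_sum,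
    hyy, hww, hyw, hwy]
  ring

lemma contDiff_apply2 {n : ℕ} {k : E n → ContinuousMultilinearMap ℝ (fun _ : Fin 2 => E n) ℝ}
    (hk : ContDiff ℝ (⊤ : ℕ∞) k) {c u v : ℝ → E n} (hc : ContDiff ℝ (⊤ : ℕ∞) c) (hu : ContDiff ℝ (⊤ : ℕ∞) u)
    (hv : ContDiff ℝ (⊤ : ℕ∞) v) : ContDiff ℝ (⊤ : ℕ∞) fun t => k (c t) ![u t, v t] := by
  let e2 := continuousMultilinearCurryLeftEquiv ℝ (fun _ : Fin 2 => E n) ℝ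
  let e1 := continuousMultilinearCurryFin1 ℝ (E n) ℝ
  have e2cd : ContDiff ℝ (⊤ : ℕ∞) ⇑e2 := by fun_prop
  have h1 : ContDiff ℝ (⊤ : ℕ∞) fun t => e2 (k (c t)) := e2cd.comp (hk.comp hc)
  have h2 : ContDiff ℝ (⊤ : ℕ∞) fun t => (e2 (k (c t))) (u t) := h1.clm_apply hu
  have e1cd : ContDiff ℝ (⊤ : ℕ∞) ⇑e1 := e1.toContinuousLinearEquiv.contDiff
  have h3 : ContDiff ℝ (⊤ : ℕ∞) fun t => e1 ((e2 (k (c t))) (u t)) := e1cd.comp h2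
  have h4 : ContDiff ℝ (⊤ : ℕ∞) fun t => (e1 ((e2 (k (c t))) (u t))) (v t) := h3.clm_apply hv
  have heq : (fun t => k (c t) ![u t, v t])
      = fun t => (e1 ((e2 (k (c t))) (u t))) (v t) := by
    funext t
    rw [continuousMultilinearCurryFin1_apply]
    rw [continuousMultilinearCurryLeftEquiv_apply]
    congr 1
    funext i
    fin_cases i <;> simp [Fin.snoc]
  rw [heq]
  exact h4

lemma sw_zero (G : ℝ → ℝ) (hG : Continuous G)
    (h : ∀ a : ℕ, ∫ t in (0:ℝ)..Real.pi, Real.cos t ^ a * G t = 0) :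
    G 0 = 0 := by
  have h11 : (-1:ℝ) ≤ 1 := by norm_num
  set X : Set ℝ := Set.Icc (-1:ℝ) 1 with hX
  obtain ⟨M, hM0, hM⟩ : ∃ M, 0 ≤ M ∧ ∀ t ∈ Set.uIcc (0:ℝ) Real.pi, |G t| ≤ M := by
    obtain ⟨M, hM⟩ := (isCompact_uIcc).exists_bound_of_continuousOn hG.continuousOn
    exact ⟨max M 0, le_max_right _ _, fun t ht => le_trans (by simpa using hM t ht) (le_max_left _ _)⟩
  set q : ℝ → X := fun t => Set.projIcc (-1) 1 h11 (Real.cos t) with hq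
  have hq_cont : Continuous q := continuous_projIcc.comp Real.continuous_cos
  have hqt : ∀ t : ℝ, ((q t : ℝ)) = Real.cos t := fun t =>
    congrArg Subtype.val (Set.projIcc_of_mem h11 ⟨Real.neg_one_le_cos t, Real.cos_le_one t⟩)
  set Φ : C(X, ℝ) → ℝ := fun u => ∫ t in (0:ℝ)..Real.pi, u (q t) * G t with hΦ
  have hint : ∀ u : C(X, ℝ), IntervalIntegrable (fun t => u (q t) * G t) volume 0 Real.pi :=
    fun u => ((u.continuous.comp hq_cont).mul hG).intervalIntegrable _ _
  have hΦlip : LipschitzWith ⟨M * Real.pi, by positivity⟩ Φ := by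
    apply LipschitzWith.of_dist_le_mul
    intro u v
    have hsub : Φ u - Φ v = ∫ t in (0:ℝ)..Real.pi, (u (q t) - v (q t)) * G t := by
      rw [hΦ]
      rw [← intervalIntegral.integral_sub (hint u) (hint v)]
      apply intervalIntegral.integral_congr
      intro t _
      ring
    rw [Real.dist_eq, hsub]
    have hb : ∀ t ∈ Set.uIoc (0:ℝ) Real.pi, ‖(u (q t) - v (q t)) * G t‖ ≤ dist u v * M := by
      intro t ht
      rw [norm_mul]
      have h1 : ‖u (q t) - v (q t)‖ ≤ dist u v := by
        calc ‖u (q t) - v (q t)‖ = dist (u (q t)) (v (q t)) := (dist_eq_norm _ _).symm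
          _ ≤ dist u v := ContinuousMap.dist_apply_le_dist _
      have h2 : ‖G t‖ ≤ M := by
        rw [Real.norm_eq_abs]
        exact hM t (Set.uIoc_subset_uIcc ht)
      exact mul_le_mul h1 h2 (norm_nonneg _) dist_nonneg
    calc |∫ t in (0:ℝ)..Real.pi, (u (q t) - v (q t)) * G t|
        ≤ dist u v * M * |Real.pi - 0| := by
          simpa using intervalIntegral.norm_integral_le_of_norm_le_const hb
      _ = (M * Real.pi) * dist u v := by
          rw [sub_zero, abs_of_nonneg Real.pi_pos.le]; ring
  have hΦcont : Continuous Φ := hΦlip.continuous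
  have hΦpoly : ∀ u ∈ polynomialFunctions X, Φ u = 0 := by
    intro u hu
    rw [polynomialFunctions, Subalgebra.mem_map] at hu
    obtain ⟨p, -, rfl⟩ := hu
    have hstep : Φ (Polynomial.toContinuousMapOnAlgHom X p)
        = ∫ t in (0:ℝ)..Real.pi, p.eval (Real.cos t) * G t := by
      rw [hΦ]
      apply intervalIntegral.integral_congr
      intro t _
      simp [Polynomial.toContinuousMapOnAlgHom_apply, Polynomial.toContinuousMapOn_apply,
        Polynomial.toContinuousMap_apply, hqt]
    rw [hstep]
    have h2 : ∫ t in (0:ℝ)..Real.pi, p.eval (Real.cos t) * G t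
        = ∫ t in (0:ℝ)..Real.pi, ∑ i ∈ Finset.range (p.natDegree + 1),
            p.coeff i * (Real.cos t ^ i * G t) := by
      apply intervalIntegral.integral_congr
      intro t _
      dsimp only
      rw [Polynomial.eval_eq_sum_range, Finset.sum_mul]
      exact Finset.sum_congr rfl fun i _ => by ring
    rw [h2, intervalIntegral.integral_finset_sum]
    · apply Finset.sum_eq_zero
      intro i _
      rw [intervalIntegral.integral_const_mul, h i, mul_zero]
    · intro i _
      exact (((Real.continuous_cos.pow i).mul hG).intervalIntegrable _ _).const_mul _
  have hΦall : ∀ u : C(X, ℝ), Φ u = 0 := by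
    intro u
    have hdense : u ∈ closure (polynomialFunctions X : Set C(X, ℝ)) := by
      have htop : (polynomialFunctions X).topologicalClosure = ⊤ :=
        polynomialFunctions_closure_eq_top (-1:ℝ) 1
      have h9 : ((polynomialFunctions X).topologicalClosure : Set C(X, ℝ)) = Set.univ := by
        rw [htop]; rfl
      rw [← Subalgebra.topologicalClosure_coe, h9]
      trivial
    have hclosed : IsClosed {v : C(X, ℝ) | Φ v = 0} := isClosed_eq hΦcont continuous_const
    exact closure_minimal (fun v hv => hΦpoly v hv) hclosed hdense
  set u₀ : C(X, ℝ) := ⟨fun x => G (Real.arccos x),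
      hG.comp (Real.continuous_arccos.comp continuous_subtype_val)⟩ with hu₀def
  have h2 : ∫ t in (0:ℝ)..Real.pi, G t * G t = 0 := by
    have hcongr : Φ u₀ = ∫ t in (0:ℝ)..Real.pi, G t * G t := by
      show (∫ t in (0:ℝ)..Real.pi, u₀ (q t) * G t) = _
      apply intervalIntegral.integral_congr
      intro t ht
      rw [Set.uIcc_of_le Real.pi_pos.le] at ht
      dsimp only
      rw [hu₀def]
      simp only [ContinuousMap.coe_mk, hqt]
      rw [Real.arccos_cos ht.1 ht.2]
    rw [← hcongr]
    exact hΦall u₀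
  by_contra hG0
  have hε : 0 < |G 0| := abs_pos.mpr hG0
  obtain ⟨δ, hδ, hδ'⟩ := Metric.continuousAt_iff.mp hG.continuousAt (|G 0| / 2) (by positivity)
  set r := min (δ / 2) Real.pi with hr
  have hr0 : 0 < r := lt_min (by positivity) Real.pi_pos
  have hrπ : r ≤ Real.pi := min_le_right _ _
  have hlow : ∀ t ∈ Set.Icc (0:ℝ) r, |G 0| / 2 ≤ |G t| := by
    rintro t ⟨ht1, ht2⟩
    have hd : dist t 0 < δ := by
      rw [Real.dist_eq, sub_zero, abs_of_nonneg ht1]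
      have := min_le_left (δ / 2) Real.pi
      linarith
    have := hδ' hd
    rw [Real.dist_eq] at this
    have habs := abs_sub_abs_le_abs_sub (G 0) (G t)
    rw [abs_sub_comm] at habs
    linarith
  have hsplit : ∫ t in (0:ℝ)..Real.pi, G t * G t
      = (∫ t in (0:ℝ)..r, G t * G t) + ∫ t in r..Real.pi, G t * G t :=
    (intervalIntegral.integral_add_adjacent_intervals ((hG.mul hG).intervalIntegrable _ _)
      ((hG.mul hG).intervalIntegrable _ _)).symm
  have h3 : (0:ℝ) < ∫ t in (0:ℝ)..r, G t * G t := by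
    have hmono : ∫ t in (0:ℝ)..r, (|G 0| / 2) * (|G 0| / 2) ≤ ∫ t in (0:ℝ)..r, G t * G t := by
      apply intervalIntegral.integral_mono_on hr0.le intervalIntegrable_const
        ((hG.mul hG).intervalIntegrable _ _)
      intro t ht
      have h1 := hlow t ht
      calc (|G 0| / 2) * (|G 0| / 2) ≤ |G t| * |G t| :=
            mul_le_mul h1 h1 (by positivity) (abs_nonneg _)
        _ = G t * G t := abs_mul_abs_self _
    have hconst : ∫ t in (0:ℝ)..r, (|G 0| / 2) * (|G 0| / 2)
        = r * ((|G 0| / 2) * (|G 0| / 2)) := by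
      rw [intervalIntegral.integral_const, smul_eq_mul, sub_zero]
    have hq2 : 0 < (|G 0| / 2) * (|G 0| / 2) := mul_pos (half_pos hε) (half_pos hε)
    linarith [mul_pos hr0 hq2]
  have h4 : (0:ℝ) ≤ ∫ t in r..Real.pi, G t * G t :=
    intervalIntegral.integral_nonneg hrπ fun u _ => mul_self_nonneg _
  rw [hsplit] at h2
  linarith

/-- **Vanishing of symmetric 3-tensors on the sphere.** Let `f` be a smooth symmetric
3-tensor field on the unit sphere `S^{n-1} ⊂ ℝⁿ` (`n ≥ 3`), represented by a smooth
family of symmetric trilinear forms on the ambient space. Suppose that for every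
homogeneous polynomial `p` on `ℝⁿ` there is a smooth symmetric 2-tensor field `k` on
`S^{n-1}` with `p · f = Dk`, where `D` is the symmetrized covariant derivative of the
round metric — equivalently, along every unit-speed great circle
`c(t) = cos(t) y + sin(t) w`, `p(c(t)) f_{c(t)}(ċ, ċ, ċ) = d/dt [k_{c(t)}(ċ, ċ)]`.
Then `f = 0` (its restriction to tangent vectors of the sphere vanishes). -/
theorem symmetric_three_tensor_vanishing (n : ℕ) (hn : 3 ≤ n)
    (f : E n → ContinuousMultilinearMap ℝ (fun _ : Fin 3 => E n) ℝ)
    (hf : ContDiff ℝ (⊤ : ℕ∞) f)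
    (hsymm : ∀ y u v w : E n,
      f y ![u, v, w] = f y ![v, u, w] ∧ f y ![u, v, w] = f y ![u, w, v])
    (hmain : ∀ (d : ℕ) (P : MvPolynomial (Fin n) ℝ), P.IsHomogeneous d →
      ∃ k : E n → ContinuousMultilinearMap ℝ (fun _ : Fin 2 => E n) ℝ,
        ContDiff ℝ (⊤ : ℕ∞) k ∧
        (∀ y u v : E n, k y ![u, v] = k y ![v, u]) ∧
        ∀ y w : E n, ‖y‖ = 1 → ‖w‖ = 1 → dot y w = 0 →
          MvPolynomial.eval (fun i => y i) P * f y ![w, w, w]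
            = deriv (fun t : ℝ =>
                k (Real.cos t • y + Real.sin t • w)
                  ![(-Real.sin t) • y + Real.cos t • w,
                    (-Real.sin t) • y + Real.cos t • w]) 0) :
    ∀ y w : E n, ‖y‖ = 1 → dot y w = 0 → f y ![w, w, w] = 0 := by
  have hvec3 : ∀ u : E n, (![u, u, u] : Fin 3 → E n) = fun _ => u := by
    intro u; funext i; fin_cases i <;> rfl
  suffices H : ∀ y w : E n, ‖y‖ = 1 → ‖w‖ = 1 → dot y w = 0 → f y ![w, w, w] = 0 by
    intro y w hy hyw
    by_cases hw : w = 0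
    · subst hw
      exact (f y).map_coord_zero 0 rfl
    · have hnw : ‖w‖ ≠ 0 := norm_ne_zero_iff.mpr hw
      set w' : E n := ‖w‖⁻¹ • w with hw'def
      have hw' : ‖w'‖ = 1 := by
        rw [hw'def, norm_smul, norm_inv, norm_norm, inv_mul_cancel₀ hnw]
      have hdot' : dot y w' = 0 := by
        simp only [dot, hw'def, PiLp.smul_apply, smul_eq_mul] at hyw ⊢
        have hr : ∀ i ∈ Finset.univ, y i * (‖w‖⁻¹ * w i) = ‖w‖⁻¹ * (y i * w i) :=
          fun i _ => by ring
        rw [Finset.sum_congr rfl hr, ← Finset.mul_sum, hyw, mul_zero]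
      have h0 := H y w' hy hw' hdot'
      have hscale : f y ![w, w, w] = (∏ _i : Fin 3, ‖w‖) • f y ![w', w', w'] := by
        rw [hvec3, hvec3]
        have hmap := (f y).map_smul_univ (fun _ : Fin 3 => ‖w‖) (fun _ => w')
        have hww : ∀ _i : Fin 3, ‖w‖ • w' = w := fun _ => by
          rw [hw'def, smul_smul, mul_inv_cancel₀ hnw, one_smul]
        rw [← hmap]
        congr 1
        funext i
        exact (hww i).symm
      rw [hscale, h0, smul_zero]
  intro y w hy hw hyw
  classical
  set c : ℝ → E n := fun t => Real.cos t • y + Real.sin t • w with hcdef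
  set c' : ℝ → E n := fun t => (-Real.sin t) • y + Real.cos t • w with hc'def
  have hccd : ContDiff ℝ (⊤ : ℕ∞) c := (Real.contDiff_cos.smul contDiff_const).add
    (Real.contDiff_sin.smul contDiff_const)
  have hc'cd : ContDiff ℝ (⊤ : ℕ∞) c' := (Real.contDiff_sin.neg.smul contDiff_const).add
    (Real.contDiff_cos.smul contDiff_const)
  have hnormc : ∀ t, ‖c t‖ = 1 := by
    intro t
    apply norm_eq_one_of_dot
    rw [hcdef]
    simp only
    rw [dot_comb hy hw hyw, ← Real.cos_sq_add_sin_sq t]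
    ring
  have hnormc' : ∀ t, ‖c' t‖ = 1 := by
    intro t
    apply norm_eq_one_of_dot
    rw [hc'def]
    simp only
    rw [dot_comb hy hw hyw, ← Real.cos_sq_add_sin_sq t]
    ring
  have hdotcc' : ∀ t, dot (c t) (c' t) = 0 := by
    intro t
    rw [hcdef, hc'def]
    simp only
    rw [dot_comb hy hw hyw]
    ring
  have hcadd : ∀ t s, Real.cos s • c t + Real.sin s • c' t = c (t + s) := by
    intro t s
    rw [hcdef, hc'def]
    simp only [Real.cos_add, Real.sin_add]
    module
  have hc'add : ∀ t s, (-Real.sin s) • c t + Real.cos s • c' t = c' (t + s) := by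
    intro t s
    rw [hcdef, hc'def]
    simp only [Real.cos_add, Real.sin_add]
    module
  set g : ℝ → ℝ := fun t => f (c t) ![c' t, c' t, c' t] with hgdef
  have hgcont : Continuous g := by
    have hrw : g = fun t => f (c t) (fun _ : Fin 3 => c' t) := by
      funext t; rw [hgdef]; simp only; rw [hvec3]
    rw [hrw]
    exact (hf.continuous.comp hccd.continuous).eval (continuous_pi fun _ => hc'cd.continuous)
  -- Step A : the basic integral identities over [-π, π]
  have stepA : ∀ a b : ℕ,
      ∫ t in (-Real.pi)..Real.pi, Real.cos t ^ a * Real.sin t ^ b * g t = 0 := by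
    intro a b
    set ℓy : MvPolynomial (Fin n) ℝ := ∑ i, MvPolynomial.C (y i) * MvPolynomial.X i with hly
    set ℓw : MvPolynomial (Fin n) ℝ := ∑ i, MvPolynomial.C (w i) * MvPolynomial.X i with hlw
    have hlyh : ℓy.IsHomogeneous 1 :=
      MvPolynomial.IsHomogeneous.sum _ _ _
        (fun i _ => (MvPolynomial.isHomogeneous_X ℝ i).C_mul (y i))
    have hlwh : ℓw.IsHomogeneous 1 :=
      MvPolynomial.IsHomogeneous.sum _ _ _
        (fun i _ => (MvPolynomial.isHomogeneous_X ℝ i).C_mul (w i))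
    have hP : (ℓy ^ a * ℓw ^ b).IsHomogeneous (a + b) := by
      have := (hlyh.pow a).mul (hlwh.pow b)
      simpa using this
    obtain ⟨k, hkcd, hksymm, hkeq⟩ := hmain (a + b) _ hP
    have hevaly : ∀ t, MvPolynomial.eval (fun i => c t i) ℓy = Real.cos t := by
      intro t
      have hd : dot y (c t) = Real.cos t := by
        have := dot_comb hy hw hyw 1 0 (Real.cos t) (Real.sin t)
        rw [hcdef]
        simpa using this
      rw [hly]
      rw [map_sum]
      simp only [map_mul, MvPolynomial.eval_C, MvPolynomial.eval_X]
      exact hd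
    have hevalw : ∀ t, MvPolynomial.eval (fun i => c t i) ℓw = Real.sin t := by
      intro t
      have hd : dot w (c t) = Real.sin t := by
        have h1 := dot_comb hy hw hyw 0 1 (Real.cos t) (Real.sin t)
        rw [hcdef]
        simpa using h1
      rw [hlw]
      rw [map_sum]
      simp only [map_mul, MvPolynomial.eval_C, MvPolynomial.eval_X]
      exact hd
    set K : ℝ → ℝ := fun t => k (c t) ![c' t, c' t] with hKdef
    have hKcd : ContDiff ℝ (⊤ : ℕ∞) K := contDiff_apply2 hkcd hccd hc'cd hc'cd
    have hKderiv : ∀ t, deriv K t = Real.cos t ^ a * Real.sin t ^ b * g t := by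
      intro t
      have h := hkeq (c t) (c' t) (hnormc t) (hnormc' t) (hdotcc' t)
      have hL : MvPolynomial.eval (fun i => c t i) (ℓy ^ a * ℓw ^ b)
          = Real.cos t ^ a * Real.sin t ^ b := by
        rw [map_mul, map_pow, map_pow, hevaly, hevalw]
      rw [hL] at h
      have hfun : (fun s => k (Real.cos s • c t + Real.sin s • c' t)
            ![(-Real.sin s) • c t + Real.cos s • c' t,
              (-Real.sin s) • c t + Real.cos s • c' t]) = fun s => K (t + s) := by
        funext s
        rw [hcadd, hc'add]
      rw [hfun, deriv_comp_const_add, add_zero] at h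
      exact h.symm
    have hπ : K Real.pi = K (-Real.pi) := by
      have h1 : c Real.pi = c (-Real.pi) := by
        rw [hcdef]; simp [Real.sin_pi, Real.cos_neg, Real.sin_neg]
      have h2 : c' Real.pi = c' (-Real.pi) := by
        rw [hc'def]; simp [Real.sin_pi, Real.cos_neg, Real.sin_neg]
      rw [hKdef]
      simp only
      rw [h1, h2]
    have hcont : Continuous fun t => Real.cos t ^ a * Real.sin t ^ b * g t :=
      ((Real.continuous_cos.pow a).mul (Real.continuous_sin.pow b)).mul hgcont
    have := intervalIntegral.integral_deriv_eq_sub' K (funext hKderiv)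
      (fun x _ => (hKcd.differentiable (by simp)).differentiableAt) hcont.continuousOn
      (a := -Real.pi) (b := Real.pi)
    rw [this, hπ, sub_self]
  -- Step B : fold onto [0, π]
  set G : ℝ → ℝ := fun t => g t + g (-t) with hGdef
  have hGcont : Continuous G := hgcont.add (hgcont.comp continuous_neg)
  have hGint : ∀ a : ℕ, ∫ t in (0:ℝ)..Real.pi, Real.cos t ^ a * G t = 0 := by
    intro a
    have h1 := stepA a 0
    simp only [pow_zero, mul_one] at h1
    have hint1 : IntervalIntegrable (fun t => Real.cos t ^ a * g t) volume (-Real.pi) 0 :=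
      ((Real.continuous_cos.pow a).mul hgcont).intervalIntegrable _ _
    have hint2 : IntervalIntegrable (fun t => Real.cos t ^ a * g t) volume 0 Real.pi :=
      ((Real.continuous_cos.pow a).mul hgcont).intervalIntegrable _ _
    have hint3 : IntervalIntegrable (fun t => Real.cos t ^ a * g (-t)) volume 0 Real.pi :=
      ((Real.continuous_cos.pow a).mul (hgcont.comp continuous_neg)).intervalIntegrable _ _
    have hsplit := intervalIntegral.integral_add_adjacent_intervals hint1 hint2
    have hneg : ∫ t in (-Real.pi)..(0:ℝ), Real.cos t ^ a * g t
        = ∫ t in (0:ℝ)..Real.pi, Real.cos t ^ a * g (-t) := by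
      have h2 := intervalIntegral.integral_comp_neg (a := (0:ℝ)) (b := Real.pi)
        (fun t => Real.cos t ^ a * g t)
      rw [neg_zero] at h2
      rw [← h2]
      apply intervalIntegral.integral_congr
      intro x _
      dsimp only
      rw [Real.cos_neg]
    have hcomb : ∫ t in (0:ℝ)..Real.pi, Real.cos t ^ a * G t
        = (∫ t in (0:ℝ)..Real.pi, Real.cos t ^ a * g t)
          + ∫ t in (0:ℝ)..Real.pi, Real.cos t ^ a * g (-t) := by
      rw [← intervalIntegral.integral_add hint2 hint3]
      apply intervalIntegral.integral_congr
      intro x _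
      dsimp only
      rw [hGdef]
      ring
    rw [hcomb, ← hneg]
    linarith [hsplit, h1]
  have hG0 := sw_zero G hGcont hGint
  have hg0 : g 0 = 0 := by
    rw [hGdef] at hG0
    simp only [neg_zero] at hG0
    linarith
  have hc0 : c 0 = y := by rw [hcdef]; simp
  have hc'0 : c' 0 = w := by rw [hc'def]; simp
  rw [show y = c 0 from hc0.symm, show w = c' 0 from hc'0.symm]
  exact hg0

end AE
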